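/- arXiv:1604.06659 — 7 statements merged into one kernel-verified Lean document; each statement's English description precedes it below -/
import Mathlib

section
/- Let k be a positive integer and let f : ℝ → ℝ be a Fibonacci function with period k, i.e. f(x+2k) = f(x+k) + f(x) for all real x. Assume f(x) ≠ 0 for all real x and f(x+k)/f(x) ≠ 1 - φ for all real x. Then for every real number x, the sequence n ↦ f(x+(n+1)k)/f(x+nk) converges to φ as n → ∞. -/
/-!
Along every progression `x, x + k, x + 2k, …` the values `a n = f (x + n k)` satisfy the
Fibonacci recurrence, so `√5 · a n = φⁿ (a 1 - ψ a 0) - ψⁿ (a 1 - φ a 0)`. Since `|ψ| < φ`,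
`a n / φⁿ` tends to `L = (a 1 - ψ a 0) / √5`, which is nonzero exactly when `a 1 / a 0 ≠ ψ = 1 - φ`;
the ratio `a (n + 1) / a n` is then the quotient of two sequences with limits `φ L` and `L`.
-/

open Filter Topology Real
open scoped goldenRatio

theorem abs_goldenConj_div_goldenRatio_lt_one : |ψ / φ| < 1 := by
  rw [abs_div, div_lt_one (by positivity), abs_of_pos goldenRatio_pos, abs_lt]
  constructor <;> linarith [neg_one_lt_goldenConj, goldenConj_neg, one_lt_goldenRatio]

section FibonacciRecurrence

variable {a : ℕ → ℝ}

theorem sub_mul_eq_of_fib_rec (hrec : ∀ n, a (n + 2) = a (n + 1) + a n) {r : ℝ}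
    (hr : r ^ 2 = r + 1) (n : ℕ) :
    a (n + 1) - r * a n = (1 - r) ^ n * (a 1 - r * a 0) := by
  induction n with
  | zero => simp
  | succ n ih =>
    rw [hrec, pow_succ, mul_right_comm, ← ih]
    linear_combination (-a n) * hr

theorem sqrt_five_mul_eq_of_fib_rec (hrec : ∀ n, a (n + 2) = a (n + 1) + a n) (n : ℕ) :
    √5 * a n = φ ^ n * (a 1 - ψ * a 0) - ψ ^ n * (a 1 - φ * a 0) := by
  have hψ := sub_mul_eq_of_fib_rec hrec goldenConj_sq n
  have hφ := sub_mul_eq_of_fib_rec hrec goldenRatio_sq n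
  rw [one_sub_goldenRatio] at hψ
  rw [one_sub_goldenConj] at hφ
  rw [← goldenRatio_sub_goldenConj]
  linear_combination hψ - hφ

theorem tendsto_div_goldenRatio_pow_of_fib_rec (hrec : ∀ n, a (n + 2) = a (n + 1) + a n) :
    Tendsto (fun n => a n / φ ^ n) atTop (𝓝 ((a 1 - ψ * a 0) / √5)) := by
  have hq := tendsto_pow_atTop_nhds_zero_of_abs_lt_one abs_goldenConj_div_goldenRatio_lt_one
  have hformula : ∀ n, a n / φ ^ n = ((a 1 - ψ * a 0) - (ψ / φ) ^ n * (a 1 - φ * a 0)) / √5 := by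
    intro n
    rw [← mul_div_cancel_left₀ (a n / φ ^ n) (by positivity : √5 ≠ 0), mul_div_assoc',
      sqrt_five_mul_eq_of_fib_rec hrec n, sub_div,
      mul_div_cancel_left₀ _ (pow_ne_zero n goldenRatio_ne_zero), mul_div_right_comm, ← div_pow]
  simp_rw [hformula]
  simpa using ((hq.mul_const (a 1 - φ * a 0)).const_sub (a 1 - ψ * a 0)).div_const √5

theorem tendsto_succ_div_of_fib_rec (hrec : ∀ n, a (n + 2) = a (n + 1) + a n)
    (h : a 1 ≠ ψ * a 0) : Tendsto (fun n => a (n + 1) / a n) atTop (𝓝 φ) := by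
  have hlim := tendsto_div_goldenRatio_pow_of_fib_rec hrec
  have hL : (a 1 - ψ * a 0) / √5 ≠ 0 := div_ne_zero (sub_ne_zero.2 h) (by positivity)
  have hsucc := (hlim.comp (tendsto_add_atTop_nat 1)).const_mul φ
  have hquot := hsucc.div hlim hL
  rw [mul_div_cancel_right₀ _ hL] at hquot
  refine hquot.congr fun n => ?_
  simp only [Pi.div_apply, Function.comp_apply, pow_succ', mul_div_assoc',
    mul_div_mul_left _ _ goldenRatio_ne_zero]
  exact div_div_div_cancel_right₀ (pow_ne_zero n goldenRatio_ne_zero) _ _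

end FibonacciRecurrence

theorem stmt_9_general (k : ℕ) (f : ℝ → ℝ)
    (hf : ∀ x : ℝ, f (x + 2 * (k : ℝ)) = f (x + (k : ℝ)) + f x)
    (hne : ∀ x : ℝ, f x ≠ 0)
    (hratio : ∀ x : ℝ, f (x + (k : ℝ)) / f x ≠ 1 - (1 + Real.sqrt 5) / 2) :
    ∀ x : ℝ,
      Filter.Tendsto (fun n : ℕ => f (x + ((n : ℝ) + 1) * (k : ℝ)) / f (x + (n : ℝ) * (k : ℝ)))
        Filter.atTop (nhds ((1 + Real.sqrt 5) / 2)) := by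
  intro x
  set a : ℕ → ℝ := fun n => f (x + n * k) with ha
  have hrec : ∀ n, a (n + 2) = a (n + 1) + a n := fun n => by
    have hshift (m : ℕ) : x + ((n + m : ℕ) : ℝ) * k = x + n * k + m * k := by push_cast; ring
    simpa only [ha, hshift, Nat.cast_ofNat, Nat.cast_one, one_mul] using hf (x + n * k)
  have hinit : a 1 ≠ ψ * a 0 := by
    intro h
    apply hratio x
    simp only [ha, Nat.cast_one, one_mul, Nat.cast_zero, zero_mul, add_zero] at h
    rw [h, mul_div_cancel_right₀ _ (hne x)]
    exact one_sub_goldenConj.symm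
  simpa [ha] using tendsto_succ_div_of_fib_rec hrec hinit

theorem stmt_9 (k : ℕ) (hk : 0 < k) (f : ℝ → ℝ)
    (hf : ∀ x : ℝ, f (x + 2 * (k : ℝ)) = f (x + (k : ℝ)) + f x)
    (hne : ∀ x : ℝ, f x ≠ 0)
    (hratio : ∀ x : ℝ, f (x + (k : ℝ)) / f x ≠ 1 - (1 + Real.sqrt 5) / 2) :
    ∀ x : ℝ,
      Filter.Tendsto (fun n : ℕ => f (x + ((n : ℝ) + 1) * (k : ℝ)) / f (x + (n : ℝ) * (k : ℝ)))
        Filter.atTop (nhds ((1 + Real.sqrt 5) / 2)) :=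
  stmt_9_general k f hf hne hratio
end

section
/- Let k be a positive integer and let f : ℝ → ℝ be a Fibonacci function with period k, i.e. f(x+2k) = f(x+k) + f(x) for all real x. Assume f(x) > 0 for all real x. Then f(x+k)/f(x) tends to φ as x → ∞ (limit over the real numbers). -/
/-!
The ratio `g x = f (x + k) / f x` satisfies `g (x + k) = 1 + 1 / g x`. The map `t ↦ 1 + 1 / t`
fixes `φ` and contracts distances to `φ` by a factor `φ⁻¹` on `[1, ∞)`. Every value of `g` lies
in `[1, 2]` and is obtained from a value of `g` one period earlier, so iterating backwards gives
`|g x - φ| ≤ φ⁻ⁿ` for all `n`: the ratio is the constant `φ`, not merely asymptotic to it.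
-/

open Real goldenRatio Filter

theorem goldenRatio_eq_one_add_inv : φ = 1 + φ⁻¹ := by
  rw [inv_goldenRatio, ← one_sub_goldenConj]
  ring

theorem abs_one_add_inv_sub_goldenRatio_le {t : ℝ} (ht : 1 ≤ t) :
    |1 + t⁻¹ - φ| ≤ φ⁻¹ * |t - φ| := by
  have ht0 : 0 < t := by linarith
  calc |1 + t⁻¹ - φ| = |t⁻¹ - φ⁻¹| := by
        congr 1
        linarith [goldenRatio_eq_one_add_inv]
    _ = t⁻¹ * |t - φ| * φ⁻¹ := by
        rw [inv_sub_inv' ht0.ne' goldenRatio_ne_zero, abs_mul, abs_mul, abs_inv, abs_inv,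
          abs_of_pos ht0, abs_of_pos goldenRatio_pos, abs_sub_comm]
    _ ≤ 1 * |t - φ| * φ⁻¹ := by
        gcongr
        exact inv_le_one_of_one_le₀ ht
    _ = φ⁻¹ * |t - φ| := by ring

section OneAddInv

variable {g : ℝ → ℝ} {c : ℝ}

theorem abs_sub_goldenRatio_le_pow_of_forall_eq_one_add_inv (hpos : ∀ x, 0 < g x)
    (hg : ∀ x, g (x + c) = 1 + (g x)⁻¹) (n : ℕ) (x : ℝ) : |g x - φ| ≤ φ⁻¹ ^ n := by
  have hg' : ∀ x, g x = 1 + (g (x - c))⁻¹ := fun x => by rw [← hg, sub_add_cancel]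
  have one_lt : ∀ x, 1 < g x := fun x => by
    rw [hg']
    linarith [inv_pos.mpr (hpos (x - c))]
  induction n generalizing x with
  | zero =>
    have lt_two : g x < 2 := by
      rw [hg']
      linarith [inv_lt_one_of_one_lt₀ (one_lt (x - c))]
    rw [pow_zero, abs_le]
    constructor <;> linarith [one_lt x, one_lt_goldenRatio, goldenRatio_lt_two]
  | succ n ih =>
    calc |g x - φ| ≤ φ⁻¹ * |g (x - c) - φ| := by
          rw [hg']
          exact abs_one_add_inv_sub_goldenRatio_le (one_lt _).le
      _ ≤ φ⁻¹ * φ⁻¹ ^ n := by gcongr; exact ih _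
      _ = φ⁻¹ ^ (n + 1) := by ring

theorem eq_goldenRatio_of_forall_eq_one_add_inv (hpos : ∀ x, 0 < g x)
    (hg : ∀ x, g (x + c) = 1 + (g x)⁻¹) (x : ℝ) : g x = φ := by
  have hlim : Tendsto (fun n : ℕ => φ⁻¹ ^ n) atTop (nhds 0) :=
    tendsto_pow_atTop_nhds_zero_of_lt_one (inv_nonneg.mpr goldenRatio_pos.le)
      (inv_lt_one_of_one_lt₀ one_lt_goldenRatio)
  have h0 : |g x - φ| ≤ 0 :=
    ge_of_tendsto' hlim (abs_sub_goldenRatio_le_pow_of_forall_eq_one_add_inv hpos hg · x)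
  exact sub_eq_zero.mp (abs_nonpos_iff.mp h0)

end OneAddInv

theorem ratio_add_eq_one_add_inv {f : ℝ → ℝ} {c : ℝ} (hf : ∀ x, f (x + 2 * c) = f (x + c) + f x)
    (hpos : ∀ x, 0 < f x) (x : ℝ) :
    f (x + c + c) / f (x + c) = 1 + (f (x + c) / f x)⁻¹ := by
  have hx := (hpos x).ne'
  have hxc := (hpos (x + c)).ne'
  rw [show x + c + c = x + 2 * c by ring, hf]
  field_simp

theorem stmt_10_general (k : ℕ) (f : ℝ → ℝ)
    (hf : ∀ x : ℝ, f (x + 2 * (k : ℝ)) = f (x + (k : ℝ)) + f x)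
    (hpos : ∀ x : ℝ, 0 < f x) :
    Filter.Tendsto (fun x : ℝ => f (x + (k : ℝ)) / f x) Filter.atTop
      (nhds ((1 + Real.sqrt 5) / 2)) := by
  have hratio : (fun x : ℝ => f (x + (k : ℝ)) / f x) = fun _ => φ :=
    funext <| eq_goldenRatio_of_forall_eq_one_add_inv (fun x => div_pos (hpos _) (hpos _))
      (ratio_add_eq_one_add_inv hf hpos)
  rw [hratio]
  exact tendsto_const_nhds

theorem stmt_10 (k : ℕ) (hk : 0 < k) (f : ℝ → ℝ)
    (hf : ∀ x : ℝ, f (x + 2 * (k : ℝ)) = f (x + (k : ℝ)) + f x)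
    (hpos : ∀ x : ℝ, 0 < f x) :
    Filter.Tendsto (fun x : ℝ => f (x + (k : ℝ)) / f x) Filter.atTop
      (nhds ((1 + Real.sqrt 5) / 2)) :=
  stmt_10_general k f hf hpos
end

section
/- Let k be a positive integer and let f : ℝ → ℝ be an odd Fibonacci function with period k, i.e. f(x+2k) = -f(x+k) + f(x) for all real x. Assume f(x) ≠ 0 for all real x and f(x+k)/f(x) ≠ φ - 1 for all real x. Then for every real number x, the sequence n ↦ f(x+(n+1)k)/f(x+nk) converges to -φ as n → ∞. -/
lemma stmt_11_aux (A B u v : ℝ) (hv : v ≠ 0) (n : ℕ) :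
    A * u ^ n + B * v ^ n = v ^ n * (A * (u / v) ^ n + B) := by
  rw [div_pow]
  field_simp

theorem stmt_11 (k : ℕ) (hk : 0 < k) (f : ℝ → ℝ)
    (hf : ∀ x : ℝ, f (x + 2 * (k : ℝ)) = -f (x + (k : ℝ)) + f x)
    (hne : ∀ x : ℝ, f x ≠ 0)
    (hratio : ∀ x : ℝ, f (x + (k : ℝ)) / f x ≠ (1 + Real.sqrt 5) / 2 - 1) :
    ∀ x : ℝ,
      Filter.Tendsto (fun n : ℕ => f (x + ((n : ℝ) + 1) * (k : ℝ)) / f (x + (n : ℝ) * (k : ℝ)))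
        Filter.atTop (nhds (-((1 + Real.sqrt 5) / 2))) := by
  intro x
  set s := Real.sqrt 5 with hs_def
  have hs0 : (0:ℝ) ≤ s := Real.sqrt_nonneg 5
  have hs : s ^ 2 = 5 := Real.sq_sqrt (by norm_num)
  have hs2 : 2 < s := by nlinarith
  set α : ℝ := (s - 1) / 2 with hαdef
  set β : ℝ := -((1 + s) / 2) with hβdef
  have hα : α ^ 2 = 1 - α := by rw [hαdef]; nlinarith
  have hβ : β ^ 2 = 1 - β := by rw [hβdef]; nlinarith
  have hαβne : α - β ≠ 0 := by rw [hαdef, hβdef]; intro h; nlinarith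
  have hβneg : β < 0 := by rw [hβdef]; linarith
  have hβne : β ≠ 0 := ne_of_lt hβneg
  set a : ℕ → ℝ := fun n => f (x + n * k) with ha
  have hane : ∀ n, a n ≠ 0 := fun n => hne _
  have hrec : ∀ n : ℕ, a (n + 1 + 1) = -a (n + 1) + a n := by
    intro n
    have h := hf (x + n * k)
    have e2 : x + (↑(n + 1 + 1) : ℝ) * k = x + ↑n * k + 2 * k := by push_cast; ring
    have e1 : x + (↑(n + 1) : ℝ) * k = x + ↑n * k + k := by push_cast; ring
    simp only [ha]
    rw [e2, e1]
    convert h using 3 <;> ring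
  set A : ℝ := (a 1 - β * a 0) / (α - β) with hA
  set B : ℝ := (α * a 0 - a 1) / (α - β) with hB
  have key : ∀ n, a n = A * α ^ n + B * β ^ n ∧
      a (n + 1) = A * α ^ (n + 1) + B * β ^ (n + 1) := by
    intro n
    induction n with
    | zero =>
      constructor
      · simp only [pow_zero, mul_one, hA, hB]
        field_simp
        ring
      · simp only [pow_one, hA, hB]
        field_simp
        ring
    | succ n ih =>
      refine ⟨ih.2, ?_⟩
      rw [hrec n, ih.1, ih.2]
      linear_combination (-(A * α ^ n)) * hα + (-(B * β ^ n)) * hβ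
  have hB0 : B ≠ 0 := by
    intro h
    rw [hB] at h
    rcases div_eq_zero_iff.mp h with h1 | h1
    · have ha1 : a 1 = α * a 0 := by linarith
      apply hratio x
      have e1 : f (x + (k : ℝ)) = a 1 := by
        simp only [ha]; norm_num
      have e0 : f x = a 0 := by
        simp only [ha]; norm_num
      rw [e1, e0, ha1, mul_div_assoc, div_self (hane 0), mul_one]
      rw [hαdef]; ring
    · exact hαβne h1
  set c : ℝ := α / β with hc
  have hcabs : |c| < 1 := by
    rw [hc, abs_div, div_lt_one (abs_pos.mpr hβne), abs_of_neg hβneg,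
      abs_of_nonneg (by rw [hαdef]; linarith)]
    rw [hαdef, hβdef]; linarith
  have hc0 : Filter.Tendsto (fun n : ℕ => c ^ n) Filter.atTop (nhds 0) :=
    tendsto_pow_atTop_nhds_zero_of_abs_lt_one hcabs
  have hform : ∀ n, a n = β ^ n * (A * c ^ n + B) := by
    intro n
    rw [(key n).1, hc]
    exact stmt_11_aux A B α β hβne n
  have hden : ∀ n, A * c ^ n + B ≠ 0 := by
    intro n h
    apply hane n
    rw [hform n, h, mul_zero]
  have hratio_eq : ∀ n, a (n + 1) / a n = β * ((A * c ^ (n + 1) + B) / (A * c ^ n + B)) := by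
    intro n
    rw [hform (n + 1), hform n, pow_succ, mul_comm (β ^ n) β, mul_assoc, mul_div_assoc,
      mul_div_mul_left _ _ (pow_ne_zero n hβne)]
  have t1 : Filter.Tendsto (fun n : ℕ => c ^ (n + 1)) Filter.atTop (nhds 0) := by
    simp only [pow_succ]
    simpa using hc0.mul_const c
  have t2 : Filter.Tendsto (fun n : ℕ => A * c ^ (n + 1) + B) Filter.atTop (nhds B) := by
    have := (t1.const_mul A).add_const B
    simpa using this
  have t3 : Filter.Tendsto (fun n : ℕ => A * c ^ n + B) Filter.atTop (nhds B) := by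
    have := (hc0.const_mul A).add_const B
    simpa using this
  have t4 : Filter.Tendsto (fun n : ℕ => β * ((A * c ^ (n + 1) + B) / (A * c ^ n + B)))
      Filter.atTop (nhds (β * (B / B))) := (t2.div t3 hB0).const_mul β
  rw [div_self hB0, mul_one] at t4
  have heq : ∀ n : ℕ, f (x + ((n : ℝ) + 1) * k) / f (x + (n : ℝ) * k) = a (n + 1) / a n := by
    intro n
    simp only [ha]
    congr 3
    push_cast
    ring
  refine Filter.Tendsto.congr (fun n => ?_) t4
  rw [heq n, hratio_eq n]
end

section
/- Let k be a positive integer, let r and s be positive real numbers, and let w : ℝ → ℝ be a Horadam function with period k, i.e. w(x+2k) = r·w(x+k) + s·w(x) for all real x. Assume w(x) > 0 for all real x. Then w(x+k)/w(x) tends to ρ := (r + √(r² + 4s))/2 as x → ∞ (limit over the real numbers). -/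
/-!
The ratio `q x = w (x + k) / w x` is positive and satisfies `q (x + k) = f (q x)` with
`f t = r + s / t`. On `(0, ∞)` the second iterate `f ∘ f` contracts towards its fixed point `ρ`
with factor `s / ρ ^ 2 < 1`, and its values stay bounded. Because `w` is positive on the whole
line, `q x` can be traced back through arbitrarily many steps `2k`, so `|q x - ρ| ≤ (s / ρ²) ^ n M`
for every `n`: the ratio is identically `ρ`, which is stronger than the limit statement.
-/

open Filter Topology

theorem eq_of_abs_sub_le_mul_abs_sub_shift {g : ℝ → ℝ} {a p c M : ℝ} (hc0 : 0 ≤ c)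
    (hc1 : c < 1) (hbound : ∀ x, |g x - a| ≤ M)
    (hcontr : ∀ x, |g (x + p) - a| ≤ c * |g x - a|) (x : ℝ) : g x = a := by
  have hpow : ∀ n : ℕ, ∀ x, |g x - a| ≤ c ^ n * M := by
    intro n
    induction n with
    | zero => simpa using hbound
    | succ n ih =>
      intro x
      calc |g x - a| = |g (x - p + p) - a| := by rw [sub_add_cancel]
        _ ≤ c * |g (x - p) - a| := hcontr _
        _ ≤ c * (c ^ n * M) := by gcongr; exact ih _
        _ = c ^ (n + 1) * M := by ring
  have hlim : Tendsto (fun n : ℕ => c ^ n * M) atTop (𝓝 0) := by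
    simpa using (tendsto_pow_atTop_nhds_zero_of_lt_one hc0 hc1).mul_const M
  have : |g x - a| ≤ 0 := ge_of_tendsto' hlim fun n => hpow n x
  exact sub_eq_zero.mp (abs_nonpos_iff.mp this)

section Horadam

variable {r s ρ : ℝ}

theorem sq_horadamRoot (hs : 0 ≤ s) :
    ((r + √(r ^ 2 + 4 * s)) / 2) ^ 2 = r * ((r + √(r ^ 2 + 4 * s)) / 2) + s := by
  linear_combination Real.sq_sqrt (show 0 ≤ r ^ 2 + 4 * s by positivity) / 4

theorem abs_add_div_sub_root (hs : 0 ≤ s) (hρ : ρ ^ 2 = r * ρ + s) (hρ0 : 0 < ρ) {t : ℝ}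
    (ht : 0 < t) : |r + s / t - ρ| = s / (t * ρ) * |t - ρ| := by
  have : r + s / t - ρ = s / (t * ρ) * (ρ - t) := by
    field_simp
    linear_combination (-t) * hρ
  rw [this, abs_mul, abs_of_nonneg (by positivity), abs_sub_comm]

theorem abs_add_div_add_div_sub_root_le (hr : 0 < r) (hs : 0 ≤ s) (hρ : ρ ^ 2 = r * ρ + s)
    (hρ0 : 0 < ρ) {t : ℝ} (ht : 0 < t) :
    |r + s / (r + s / t) - ρ| ≤ s / ρ ^ 2 * |t - ρ| := by
  have hft : 0 < r + s / t := by positivity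
  rw [abs_add_div_sub_root hs hρ hρ0 hft, abs_add_div_sub_root hs hρ hρ0 ht, ← mul_assoc]
  gcongr
  have : s / ((r + s / t) * ρ) * (s / (t * ρ)) = s / ρ ^ 2 * (s / (r * t + s)) := by
    field_simp
  rw [this]
  exact mul_le_of_le_one_right (by positivity) (div_le_one_of_le₀ (by nlinarith) (by positivity))

theorem abs_add_div_add_div_sub_le (hr : 0 < r) (hs : 0 ≤ s) (hρ0 : 0 ≤ ρ) {t : ℝ}
    (ht : 0 < t) : |r + s / (r + s / t) - ρ| ≤ r + s / r + ρ := by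
  have hrf : r ≤ r + s / t := le_add_of_nonneg_right (by positivity)
  have hsf : s / (r + s / t) ≤ s / r := div_le_div_of_nonneg_left hs hr hrf
  rw [abs_le]
  constructor <;> nlinarith [div_nonneg hs (hr.trans_le hrf).le]

theorem horadam_ratio_add_period {w : ℝ → ℝ} {p : ℝ}
    (hw : ∀ x, w (x + 2 * p) = r * w (x + p) + s * w x) (hpos : ∀ x, 0 < w x) (x : ℝ) :
    w (x + p + p) / w (x + p) = r + s / (w (x + p) / w x) := by
  have hx := (hpos x).ne'
  have hxp := (hpos (x + p)).ne'
  rw [add_assoc, ← two_mul, hw]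
  field_simp

end Horadam

theorem stmt_12_general (k : ℕ) (r s : ℝ) (hr : 0 < r) (hs : 0 < s)
    (w : ℝ → ℝ)
    (hw : ∀ x : ℝ, w (x + 2 * (k : ℝ)) = r * w (x + (k : ℝ)) + s * w x)
    (hpos : ∀ x : ℝ, 0 < w x) :
    Filter.Tendsto (fun x : ℝ => w (x + (k : ℝ)) / w x) Filter.atTop
      (nhds ((r + Real.sqrt (r ^ 2 + 4 * s)) / 2)) := by
  set ρ := (r + √(r ^ 2 + 4 * s)) / 2
  have hρ0 : 0 < ρ := by positivity
  have hρ : ρ ^ 2 = r * ρ + s := sq_horadamRoot hs.le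
  set q : ℝ → ℝ := fun x => w (x + k) / w x
  have hq0 (x : ℝ) : 0 < q x := div_pos (hpos _) (hpos _)
  have hq2 (x : ℝ) : q (x + 2 * k) = r + s / (r + s / q x) := by
    simp only [q, two_mul, ← add_assoc, horadam_ratio_add_period hw hpos]
  have hc1 : s / ρ ^ 2 < 1 := (div_lt_one (by positivity)).mpr (by nlinarith)
  have hbound (x : ℝ) : |q x - ρ| ≤ r + s / r + ρ := by
    rw [← sub_add_cancel x (2 * k), hq2]
    exact abs_add_div_add_div_sub_le hr hs.le hρ0.le (hq0 _)
  have hconst : ∀ x, q x = ρ :=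
    eq_of_abs_sub_le_mul_abs_sub_shift (by positivity) hc1 hbound fun x => by
      rw [hq2]; exact abs_add_div_add_div_sub_root_le hr hs.le hρ hρ0 (hq0 x)
  exact tendsto_const_nhds.congr fun x => (hconst x).symm

theorem stmt_12 (k : ℕ) (hk : 0 < k) (r s : ℝ) (hr : 0 < r) (hs : 0 < s)
    (w : ℝ → ℝ)
    (hw : ∀ x : ℝ, w (x + 2 * (k : ℝ)) = r * w (x + (k : ℝ)) + s * w x)
    (hpos : ∀ x : ℝ, 0 < w x) :
    Filter.Tendsto (fun x : ℝ => w (x + (k : ℝ)) / w x) Filter.atTop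
      (nhds ((r + Real.sqrt (r ^ 2 + 4 * s)) / 2)) :=
  stmt_12_general k r s hr hs w hw hpos
end

section
/- Let k be a positive integer, let r and s be positive real numbers, and let w : ℝ → ℝ be a Horadam function with period k, i.e. w(x+2k) = r·w(x+k) + s·w(x) for all real x. Assume w(x) ≠ 0 for all real x and w(x+k)/w(x) ≠ (r - √(r² + 4s))/2 for all real x. Then for every real number x, the sequence n ↦ w(x+(n+1)k)/w(x+nk) converges to ρ := (r + √(r² + 4s))/2 as n → ∞. -/
/-!
Along each arithmetic progression `x + n k` the values of `w` form a second-order linear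
recurrence, so by Binet's formula `w (x + n k) = A ρ ^ n + B σ ^ n` with `σ` the other root.
Since `r, s > 0` the roots are real with `|σ| < ρ`, and the condition `w (x + k) / w x ≠ σ`
says exactly that `A ≠ 0`; hence the dominant term `A ρ ^ n` governs the ratio.
-/

open Filter Topology

theorem binet_of_recurrence {K : Type*} [Field K] {r s ρ σ : K} (hρσ : ρ ≠ σ)
    (hsum : ρ + σ = r) (hprod : ρ * σ = -s) {a : ℕ → K}
    (ha : ∀ n, a (n + 2) = r * a (n + 1) + s * a n) (n : ℕ) :
    a n = (a 1 - σ * a 0) / (ρ - σ) * ρ ^ n + (ρ * a 0 - a 1) / (ρ - σ) * σ ^ n := by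
  have hd : ρ - σ ≠ 0 := sub_ne_zero.2 hρσ
  induction n using Nat.twoStepInduction with
  | zero => field_simp; ring
  | one => field_simp; ring
  | more n ih₁ ih₂ =>
    obtain rfl : s = -(ρ * σ) := by rw [hprod, neg_neg]
    rw [ha, ih₁, ih₂, ← hsum]
    ring

theorem tendsto_div_pow_of_binet {𝕜 : Type*} [NormedField 𝕜] {a : ℕ → 𝕜} {A B ρ σ : 𝕜}
    (hσρ : ‖σ‖ < ‖ρ‖) (ha : ∀ n, a n = A * ρ ^ n + B * σ ^ n) :
    Tendsto (fun n => a n / ρ ^ n) atTop (𝓝 A) := by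
  have hρ : ρ ≠ 0 := norm_pos_iff.1 ((norm_nonneg σ).trans_lt hσρ)
  have hq : ‖σ / ρ‖ < 1 := by
    rwa [norm_div, div_lt_one ((norm_nonneg σ).trans_lt hσρ)]
  have hlim := ((tendsto_pow_atTop_nhds_zero_of_norm_lt_one hq).const_mul B).const_add A
  rw [mul_zero, add_zero] at hlim
  refine hlim.congr fun n => ?_
  rw [ha, div_pow]
  field_simp

theorem tendsto_succ_div_of_binet {𝕜 : Type*} [NormedField 𝕜] {a : ℕ → 𝕜} {A B ρ σ : 𝕜}
    (hA : A ≠ 0) (hσρ : ‖σ‖ < ‖ρ‖) (ha : ∀ n, a n = A * ρ ^ n + B * σ ^ n) :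
    Tendsto (fun n => a (n + 1) / a n) atTop (𝓝 ρ) := by
  have hρ : ρ ≠ 0 := norm_pos_iff.1 ((norm_nonneg σ).trans_lt hσρ)
  have hu := tendsto_div_pow_of_binet hσρ ha
  have hlim := ((hu.comp (tendsto_add_atTop_nat 1)).div hu hA).const_mul ρ
  rw [div_self hA, mul_one] at hlim
  refine hlim.congr fun n => ?_
  show ρ * (a (n + 1) / ρ ^ (n + 1) / (a n / ρ ^ n)) = _
  rw [div_div_div_eq, pow_succ]
  field_simp

theorem add_sqrt_mul_sub_sqrt {r s : ℝ} (h : 0 ≤ r ^ 2 + 4 * s) :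
    (r + √(r ^ 2 + 4 * s)) / 2 * ((r - √(r ^ 2 + 4 * s)) / 2) = -s := by
  linear_combination (-1 / 4 : ℝ) * Real.sq_sqrt h

theorem abs_sub_sqrt_lt_abs_add_sqrt {r s : ℝ} (hr : 0 < r) (hs : 0 ≤ s) :
    |(r - √(r ^ 2 + 4 * s)) / 2| < |(r + √(r ^ 2 + 4 * s)) / 2| := by
  have hd : r ≤ √(r ^ 2 + 4 * s) :=
    Real.le_sqrt_of_sq_le (by linarith)
  rw [abs_of_nonpos (by linarith), abs_of_pos (by positivity)]
  linarith

theorem stmt_13_general (k : ℕ) (r s : ℝ) (hr : 0 < r) (hs : 0 < s)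
    (w : ℝ → ℝ)
    (hw : ∀ x : ℝ, w (x + 2 * (k : ℝ)) = r * w (x + (k : ℝ)) + s * w x)
    (hne : ∀ x : ℝ, w x ≠ 0)
    (hratio : ∀ x : ℝ, w (x + (k : ℝ)) / w x ≠ (r - Real.sqrt (r ^ 2 + 4 * s)) / 2) :
    ∀ x : ℝ,
      Filter.Tendsto (fun n : ℕ => w (x + ((n : ℝ) + 1) * (k : ℝ)) / w (x + (n : ℝ) * (k : ℝ)))
        Filter.atTop (nhds ((r + Real.sqrt (r ^ 2 + 4 * s)) / 2)) := by
  intro x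
  set ρ := (r + √(r ^ 2 + 4 * s)) / 2
  set σ := (r - √(r ^ 2 + 4 * s)) / 2
  let a : ℕ → ℝ := fun n => w (x + n * k)
  have ha : ∀ n, a (n + 2) = r * a (n + 1) + s * a n := fun n => by
    simp only [a]
    push_cast
    rw [add_mul, add_mul, ← add_assoc, ← add_assoc, one_mul]
    exact hw _
  have hσρ : ‖σ‖ < ‖ρ‖ := abs_sub_sqrt_lt_abs_add_sqrt hr hs.le
  have hρσ : ρ ≠ σ := fun h => hσρ.ne (by rw [h])
  have hA : (a 1 - σ * a 0) / (ρ - σ) ≠ 0 := by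
    refine div_ne_zero (sub_ne_zero.2 fun h => hratio x ?_) (sub_ne_zero.2 hρσ)
    rw [div_eq_iff (hne x)]
    simpa [a] using h
  have hbinet := binet_of_recurrence hρσ (by ring) (add_sqrt_mul_sub_sqrt (by positivity)) ha
  simpa [a] using tendsto_succ_div_of_binet hA hσρ hbinet

theorem stmt_13 (k : ℕ) (hk : 0 < k) (r s : ℝ) (hr : 0 < r) (hs : 0 < s)
    (w : ℝ → ℝ)
    (hw : ∀ x : ℝ, w (x + 2 * (k : ℝ)) = r * w (x + (k : ℝ)) + s * w x)
    (hne : ∀ x : ℝ, w x ≠ 0)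
    (hratio : ∀ x : ℝ, w (x + (k : ℝ)) / w x ≠ (r - Real.sqrt (r ^ 2 + 4 * s)) / 2) :
    ∀ x : ℝ,
      Filter.Tendsto (fun n : ℕ => w (x + ((n : ℝ) + 1) * (k : ℝ)) / w (x + (n : ℝ) * (k : ℝ)))
        Filter.atTop (nhds ((r + Real.sqrt (r ^ 2 + 4 * s)) / 2)) :=
  stmt_13_general k r s hr hs w hw hne hratio
end

section
/- Let k be a positive integer, let r and s be positive real numbers, and let w : ℝ → ℝ satisfy w(x+2k) = -r·w(x+k) + s·w(x) for all real x. Assume w(x) ≠ 0 for all real x and w(x+k)/w(x) ≠ (-r + √(r² + 4s))/2 for all real x. Then for every real number x, the sequence n ↦ w(x+(n+1)k)/w(x+nk) converges to -ρ := -(r + √(r² + 4s))/2 as n → ∞. -/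
/-!
The roots `α = (-r + √(r² + 4s)) / 2` and `β = -ρ` satisfy `α + β = -r`, `α β = -s` and `|α| < |β|`.
Along `u n = w (x + n k)` the differences `u (n + 1) - α u n` and `u (n + 1) - β u n` are then
geometric with ratios `β` and `α`; eliminating `u (n + 1)` gives
`u n = βⁿ ((u₁ - α u₀) - (α / β)ⁿ (u₁ - β u₀)) / (β - α)`, so `u (n + 1) / u n → β`
as soon as `u₁ ≠ α u₀`.
-/

open Filter Topology

section TwoTermRecurrence

variable {𝕜 : Type*} [Field 𝕜] {u : ℕ → 𝕜} {α β : 𝕜}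

theorem succ_sub_mul_eq_pow_mul (hu : ∀ n, u (n + 2) = (α + β) * u (n + 1) - α * β * u n)
    (n : ℕ) : u (n + 1) - α * u n = β ^ n * (u 1 - α * u 0) := by
  induction n with
  | zero => simp
  | succ n ih => rw [hu, pow_succ']; linear_combination β * ih

theorem sub_mul_eq_pow_mul_sub_pow_mul
    (hu : ∀ n, u (n + 2) = (α + β) * u (n + 1) - α * β * u n) (n : ℕ) :
    (β - α) * u n = β ^ n * (u 1 - α * u 0) - α ^ n * (u 1 - β * u 0) := by
  have hu' : ∀ n, u (n + 2) = (β + α) * u (n + 1) - β * α * u n := fun n => by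
    rw [hu]; ring
  linear_combination succ_sub_mul_eq_pow_mul hu n - succ_sub_mul_eq_pow_mul hu' n

end TwoTermRecurrence

theorem tendsto_succ_div_of_recurrence {𝕜 : Type*} [NormedField 𝕜] {u : ℕ → 𝕜} {α β : 𝕜}
    (hαβ : ‖α‖ < ‖β‖) (hu : ∀ n, u (n + 2) = (α + β) * u (n + 1) - α * β * u n)
    (h₁ : u 1 ≠ α * u 0) :
    Tendsto (fun n => u (n + 1) / u n) atTop (𝓝 β) := by
  have hβ_norm : 0 < ‖β‖ := (norm_nonneg α).trans_lt hαβ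
  have hβ : β ≠ 0 := norm_pos_iff.mp hβ_norm
  have hv : u 1 - α * u 0 ≠ 0 := sub_ne_zero.mpr h₁
  have hβα : β - α ≠ 0 := sub_ne_zero.mpr fun h => hαβ.ne (h ▸ rfl)
  set g : ℕ → 𝕜 := fun n => (u 1 - α * u 0) - (α / β) ^ n * (u 1 - β * u 0)
  have hu_eq : ∀ n, u n = β ^ n * g n / (β - α) := fun n => by
    rw [eq_div_iff hβα, mul_comm, sub_mul_eq_pow_mul_sub_pow_mul hu]
    simp only [g, div_pow]
    field_simp
  have hg : Tendsto g atTop (𝓝 (u 1 - α * u 0)) := by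
    have hq : ‖α / β‖ < 1 := by
      rwa [norm_div, div_lt_one hβ_norm]
    simpa using tendsto_const_nhds.sub
      ((tendsto_pow_atTop_nhds_zero_of_norm_lt_one hq).mul_const (u 1 - β * u 0))
  have hratio : ∀ n, u (n + 1) / u n = β * g (n + 1) / g n := fun n => by
    rw [hu_eq, hu_eq, div_div_div_cancel_right₀ hβα, pow_succ', mul_assoc, mul_left_comm,
      mul_div_mul_left _ _ (pow_ne_zero n hβ)]
  have hlim := ((hg.comp (tendsto_add_atTop_nat 1)).const_mul β).div hg hv
  rw [mul_div_assoc, div_self hv, mul_one] at hlim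
  simp only [hratio]
  exact hlim

theorem stmt_14_general (k : ℕ) (r s : ℝ) (hr : 0 < r) (hs : 0 < s)
    (w : ℝ → ℝ)
    (hw : ∀ x : ℝ, w (x + 2 * (k : ℝ)) = -r * w (x + (k : ℝ)) + s * w x)
    (hne : ∀ x : ℝ, w x ≠ 0)
    (hratio : ∀ x : ℝ, w (x + (k : ℝ)) / w x ≠ (-r + Real.sqrt (r ^ 2 + 4 * s)) / 2) :
    ∀ x : ℝ,
      Filter.Tendsto (fun n : ℕ => w (x + ((n : ℝ) + 1) * (k : ℝ)) / w (x + (n : ℝ) * (k : ℝ)))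
        Filter.atTop (nhds (-((r + Real.sqrt (r ^ 2 + 4 * s)) / 2))) := by
  intro x
  set D := Real.sqrt (r ^ 2 + 4 * s)
  have hD : D ^ 2 = r ^ 2 + 4 * s := Real.sq_sqrt (by positivity)
  have hDpos : 0 < D := Real.sqrt_pos.mpr (by positivity)
  set α := (-r + D) / 2 with hα
  set β := -((r + D) / 2) with hβ
  set u : ℕ → ℝ := fun n => w (x + n * k)
  have hu : ∀ n, u (n + 2) = (α + β) * u (n + 1) - α * β * u n := fun n => by
    simp only [u, Nat.cast_add, Nat.cast_ofNat, Nat.cast_one]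
    rw [add_mul, ← add_assoc, hw, add_one_mul, ← add_assoc]
    linear_combination (-w (x + n * k) / 4) * hD
  have h₁ : u 1 ≠ α * u 0 := fun h => hratio x <| by
    simp only [u, Nat.cast_one, Nat.cast_zero, one_mul, zero_mul, add_zero] at h
    rw [h, mul_div_cancel_right₀ _ (hne x)]
  have hαβ : ‖α‖ < ‖β‖ := by
    rw [Real.norm_eq_abs, Real.norm_eq_abs, abs_neg, abs_lt, abs_of_pos (by positivity)]
    constructor <;> linarith
  simpa [u] using tendsto_succ_div_of_recurrence hαβ hu h₁

theorem stmt_14 (k : ℕ) (hk : 0 < k) (r s : ℝ) (hr : 0 < r) (hs : 0 < s)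
    (w : ℝ → ℝ)
    (hw : ∀ x : ℝ, w (x + 2 * (k : ℝ)) = -r * w (x + (k : ℝ)) + s * w x)
    (hne : ∀ x : ℝ, w x ≠ 0)
    (hratio : ∀ x : ℝ, w (x + (k : ℝ)) / w x ≠ (-r + Real.sqrt (r ^ 2 + 4 * s)) / 2) :
    ∀ x : ℝ,
      Filter.Tendsto (fun n : ℕ => w (x + ((n : ℝ) + 1) * (k : ℝ)) / w (x + (n : ℝ) * (k : ℝ)))
        Filter.atTop (nhds (-((r + Real.sqrt (r ^ 2 + 4 * s)) / 2))) :=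
  stmt_14_general k r s hr hs w hw hne hratio
end

section
/- Let p and q be positive real numbers and let (u_n)_{n≥0} be defined by u_0 = 0, u_1 = 1, u_{n+2} = p·u_{n+1} + q·u_n. Let h_0 be a real number such that h_0 ≠ -(p + √(p² + 4q))/2 and h_0 ≠ -u_{m+1}/u_m for every integer m ≥ 1, and let (h_n)_{n≥0} satisfy h_{n+1} = q/(p + h_n) for all n ≥ 0. Then the sequence (h_n) converges to (-p + √(p² + 4q))/2 = q/Φ₊, where Φ₊ = (p + √(p² + 4q))/2. -/
/-!
Put `d n = u n * h 0 + u (n + 1)`. Then `d` solves the same recurrence as `u`, it never vanishes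
by the hypotheses on `h 0`, and `p + h n = d (n + 1) / d n` for every `n`. Writing `α > 0 > β` for
the roots of `t² = p t + q`, Binet's formula gives `d n / α ^ n → (h 0 + α) / (α - β) ≠ 0`,
so `d (n + 1) / d n → α` and `h n → α - p = q / α`.
-/

open Filter Topology

def SolvesRecurrence {R : Type*} [Mul R] [Add R] (p q : R) (x : ℕ → R) : Prop :=
  ∀ n, x (n + 2) = p * x (n + 1) + q * x n

namespace SolvesRecurrence

section CommRing

variable {R : Type*} [CommRing R] {p q α β : R} {x : ℕ → R}

theorem sub_mul_eq_pow_mul (hx : SolvesRecurrence p q x) (hsum : α + β = p) (hprod : α * β = -q)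
    (n : ℕ) : x (n + 1) - β * x n = α ^ n * (x 1 - β * x 0) := by
  induction n with
  | zero => simp
  | succ n ih =>
    rw [hx n, pow_succ]
    linear_combination α * ih - x (n + 1) * hsum + x n * hprod

theorem binet (hx : SolvesRecurrence p q x) (hsum : α + β = p) (hprod : α * β = -q) (n : ℕ) :
    (α - β) * x n = α ^ n * (x 1 - β * x 0) - β ^ n * (x 1 - α * x 0) := by
  have hα := hx.sub_mul_eq_pow_mul hsum hprod n
  have hβ := hx.sub_mul_eq_pow_mul (α := β) (β := α) (by rw [add_comm, hsum])
    (by rw [mul_comm, hprod]) n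
  linear_combination hα - hβ

end CommRing

theorem pos {R : Type*} [CommRing R] [LinearOrder R] [IsStrictOrderedRing R] {p q : R}
    {x : ℕ → R} (hx : SolvesRecurrence p q x) (hp : 0 < p) (hq : 0 ≤ q) (hx0 : 0 ≤ x 0)
    (hx1 : 0 < x 1) (n : ℕ) : 0 < x (n + 1) := by
  suffices ∀ n, 0 ≤ x n ∧ 0 < x (n + 1) from (this n).2
  intro n
  induction n with
  | zero => exact ⟨hx0, hx1⟩
  | succ n ih =>
    obtain ⟨hn, hn1⟩ := ih
    exact ⟨hn1.le, by rw [hx n]; positivity⟩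

variable {p q α β : ℝ} {x : ℕ → ℝ}

theorem tendsto_div_pow (hx : SolvesRecurrence p q x) (hsum : α + β = p) (hprod : α * β = -q)
    (hβα : |β| < |α|) :
    Tendsto (fun n ↦ x n / α ^ n) atTop (𝓝 ((x 1 - β * x 0) / (α - β))) := by
  have hα : α ≠ 0 := abs_pos.mp ((abs_nonneg β).trans_lt hβα)
  have hαβ : α - β ≠ 0 := sub_ne_zero.mpr fun h ↦ hβα.ne (by rw [h])
  have hratio : Tendsto (fun n : ℕ ↦ (β / α) ^ n) atTop (𝓝 0) := by
    rw [tendsto_pow_atTop_nhds_zero_iff, abs_div, div_lt_one (abs_pos.mpr hα)]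
    exact hβα
  have hlim := (tendsto_const_nhds (x := x 1 - β * x 0)).sub
    (hratio.mul_const (x 1 - α * x 0)) |>.div_const (α - β)
  rw [zero_mul, sub_zero] at hlim
  refine hlim.congr fun n ↦ ?_
  rw [div_pow, div_eq_div_iff hαβ (pow_ne_zero n hα)]
  field_simp
  linear_combination -hx.binet hsum hprod n

theorem tendsto_succ_div (hx : SolvesRecurrence p q x) (hsum : α + β = p) (hprod : α * β = -q)
    (hβα : |β| < |α|) (hx01 : x 1 - β * x 0 ≠ 0) :
    Tendsto (fun n ↦ x (n + 1) / x n) atTop (𝓝 α) := by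
  have hα : α ≠ 0 := abs_pos.mp ((abs_nonneg β).trans_lt hβα)
  have hαβ : α - β ≠ 0 := sub_ne_zero.mpr fun h ↦ hβα.ne (by rw [h])
  have hL : (x 1 - β * x 0) / (α - β) ≠ 0 := div_ne_zero hx01 hαβ
  have hlim := hx.tendsto_div_pow hsum hprod hβα
  have hquot : Tendsto (fun n ↦ α * (x (n + 1) / α ^ (n + 1)) / (x n / α ^ n)) atTop
      (𝓝 (α * ((x 1 - β * x 0) / (α - β)) / ((x 1 - β * x 0) / (α - β)))) :=
    ((hlim.comp (tendsto_add_atTop_nat 1)).const_mul α).div hlim hL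
  rw [mul_div_cancel_right₀ _ hL] at hquot
  refine hquot.congr fun n ↦ ?_
  rw [pow_succ', mul_div_assoc', mul_div_mul_left _ _ hα,
    div_div_div_cancel_right₀ (pow_ne_zero n hα)]

end SolvesRecurrence

theorem add_eq_succ_div_of_solvesRecurrence {K : Type*} [Field K] {p q : K} {h d : ℕ → K}
    (hd : SolvesRecurrence p q d) (hd_ne : ∀ n, d n ≠ 0) (hrec : ∀ n, h (n + 1) = q / (p + h n))
    (h0 : p + h 0 = d 1 / d 0) (n : ℕ) : p + h n = d (n + 1) / d n := by
  induction n with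
  | zero => exact h0
  | succ n ih =>
    have := hd_ne n
    have := hd_ne (n + 1)
    rw [hrec n, ih, hd n]
    field_simp

theorem stmt_15 (p q : ℝ) (hp : 0 < p) (hq : 0 < q) (u : ℕ → ℝ)
    (hu0 : u 0 = 0) (hu1 : u 1 = 1)
    (hurec : ∀ n : ℕ, u (n + 2) = p * u (n + 1) + q * u n)
    (h : ℕ → ℝ)
    (h0 : h 0 ≠ -((p + Real.sqrt (p ^ 2 + 4 * q)) / 2))
    (h0' : ∀ m : ℕ, 1 ≤ m → h 0 ≠ -(u (m + 1) / u m))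
    (hrec : ∀ n : ℕ, h (n + 1) = q / (p + h n)) :
    Filter.Tendsto h Filter.atTop (nhds ((-p + Real.sqrt (p ^ 2 + 4 * q)) / 2)) ∧
      (-p + Real.sqrt (p ^ 2 + 4 * q)) / 2 = q / ((p + Real.sqrt (p ^ 2 + 4 * q)) / 2) := by
  set s := Real.sqrt (p ^ 2 + 4 * q)
  have hs : s ^ 2 = p ^ 2 + 4 * q := Real.sq_sqrt (by positivity)
  have hps : p < s := by nlinarith [Real.sqrt_nonneg (p ^ 2 + 4 * q)]
  have hβα : |(p - s) / 2| < |(p + s) / 2| := by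
    rw [abs_of_neg (by linarith), abs_of_pos (by linarith)]; linarith
  have hupos := SolvesRecurrence.pos hurec hp hq.le hu0.ge (hu1 ▸ one_pos)
  set d : ℕ → ℝ := fun n ↦ u n * h 0 + u (n + 1)
  have hd : SolvesRecurrence p q d := fun n ↦ by simp only [d, hurec]; ring
  have hd_ne : ∀ n, d n ≠ 0 := by
    rintro (_ | m) hm
    · simp [d, hu0, hu1] at hm
    · refine h0' (m + 1) (by omega) ?_
      have := (hupos m).ne'
      field_simp
      linarith [show d (m + 1) = 0 from hm]
  have hu2 : u 2 = p := by simp [hurec 0, hu0, hu1]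
  have hh := add_eq_succ_div_of_solvesRecurrence hd hd_ne hrec (by simp [d, hu0, hu1, hu2]; ring)
  have hlim := hd.tendsto_succ_div (by ring) (by linear_combination -hs / 4) hβα
    (by simp only [d, hu0, hu1, hu2]; contrapose! h0; linarith)
  refine ⟨?_, ?_⟩
  · rw [show (-p + s) / 2 = (p + s) / 2 - p by ring]
    exact (hlim.sub_const p).congr fun n ↦ by rw [← hh n]; ring
  · have : p + s ≠ 0 := by linarith
    field_simp
    linear_combination hs
end
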